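/- arXiv:2109.00125 — 2 statements merged into one kernel-verified Lean document; each statement's English description precedes it below -/
import Mathlib

section
/- Let α_k = (∫_{−1}^{1} ReLU(x) L_k(x) dx)/(∫_{−1}^{1} L_k(x)² dx) be the k-th Legendre coefficient of ReLU. Then for every integer m ≥ 1: α_{2m} = (−1)^m (4m+1) / (2·(2 − 2m(2m+1))·4^m) · C(2m, m), where C(2m, m) is the central binomial coefficient, and α_{2m+1} = 0. -/
open Polynomial

/-- The ReLU activation function. -/
noncomputable def relu (x : ℝ) : ℝ := max x 0

/-- The `k`-th Legendre polynomial on `[-1,1]`, normalized so that `legendre k |>.eval 1 = 1`,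
defined via Rodrigues' formula. These are pairwise orthogonal in `L²([-1,1])`. -/
noncomputable def legendre (k : ℕ) : Polynomial ℝ :=
  ((2 ^ k * Nat.factorial k : ℝ))⁻¹ • ((fun p : Polynomial ℝ => p.derivative)^[k] ((X ^ 2 - 1) ^ k))

/-- The `k`-th Legendre coefficient of ReLU:
`α_k = (∫_{-1}^{1} ReLU(x) L_k(x) dx) / (∫_{-1}^{1} L_k(x)² dx)`. -/
noncomputable def legCoeff (k : ℕ) : ℝ :=
  (∫ x in (-1:ℝ)..1, relu x * (legendre k).eval x) /
    (∫ x in (-1:ℝ)..1, ((legendre k).eval x) ^ 2)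


lemma poly_intInt (p : ℝ[X]) (a b : ℝ) :
    IntervalIntegrable (fun x => p.eval x) MeasureTheory.volume a b :=
  p.continuous.intervalIntegrable a b

lemma integral_eval_derivative (Q : ℝ[X]) (a b : ℝ) :
    ∫ x in a..b, Q.derivative.eval x = Q.eval b - Q.eval a := by
  refine intervalIntegral.integral_eq_sub_of_hasDerivAt (fun x _ => Q.hasDerivAt x) ?_
  exact poly_intInt _ a b

lemma W_ne_zero (n : ℕ) : (((X:ℝ[X])^2 - 1)^n) ≠ 0 := by
  apply pow_ne_zero
  intro h
  have := congrArg (eval 0) h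
  simp at this

lemma eval_iter_deriv_W_eq_zero {n j : ℕ} (hj : j < n) {t : ℝ} (ht : t^2 = 1) :
    (derivative^[j] (((X:ℝ[X])^2 - 1)^n)).eval t = 0 := by
  have hdvd : (X - C t)^n ∣ ((X:ℝ[X])^2 - 1)^n :=
    pow_dvd_pow_of_dvd (dvd_iff_isRoot.mpr (by simp [IsRoot, ht])) n
  have hle : n ≤ rootMultiplicity t (((X:ℝ[X])^2 - 1)^n) :=
    (le_rootMultiplicity_iff (W_ne_zero n)).mpr hdvd
  exact isRoot_iterate_derivative_of_lt_rootMultiplicity (lt_of_lt_of_le hj hle)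

lemma coeff_W (n k : ℕ) :
    ((((X:ℝ[X])^2 - 1)^n)).coeff k =
      if k % 2 = 0 then (-1:ℝ)^(k/2 + n) * n.choose (k/2) else 0 := by
  rw [sub_pow]
  have h : ∀ i : ℕ, ((-1:ℝ[X])^(i+n) * ((X:ℝ[X])^2)^i * (1:ℝ[X])^(n-i) * (n.choose i : ℝ[X]))
      = ((-1:ℝ)^(i+n) * n.choose i) • X^(2*i) := by
    intro i
    rw [one_pow, mul_one, ← pow_mul, smul_eq_C_mul, map_mul, map_pow, map_neg, C_1,
      Polynomial.C_eq_natCast]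
    ring
  simp only [h, finset_sum_coeff, coeff_smul, coeff_X_pow, smul_eq_mul]
  by_cases hk : k % 2 = 0
  · simp only [hk, if_true]
    rcases Nat.lt_or_ge (k/2) (n+1) with hlt | hge
    · rw [Finset.sum_eq_single (k/2)]
      · rw [if_pos (by omega), mul_one]
      · intro i _ hne
        rw [if_neg (by omega), mul_zero]
      · intro habs
        exact absurd (Finset.mem_range.mpr hlt) habs
    · rw [Finset.sum_eq_zero, Nat.choose_eq_zero_of_lt (by omega)]
      · simp
      · intro i hi
        rw [Finset.mem_range] at hi
        rw [if_neg (by omega), mul_zero]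
  · simp only [hk, if_false]
    apply Finset.sum_eq_zero
    intro i _
    rw [if_neg (by omega), mul_zero]

lemma integral_W (n : ℕ) :
    ∫ x in (-1:ℝ)..1, (((X:ℝ[X])^2-1)^n).eval x
      = (-1)^n * 2^(2*n+1) * (n.factorial:ℝ)^2 / ((2*n+1).factorial) := by
  induction n with
  | zero => simp; norm_num
  | succ n ih =>
    have key : derivative ((X:ℝ[X]) * ((X:ℝ[X])^2-1)^(n+1))
        = (C ((n:ℝ)) * 2 + 3) * ((X:ℝ[X])^2-1)^(n+1)
          + (C ((n:ℝ)) * 2 + 2) * ((X:ℝ[X])^2-1)^n := by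
      rw [derivative_mul, derivative_X, derivative_pow, derivative_sub, derivative_pow,
        derivative_X, derivative_one]
      push_cast
      rw [Polynomial.C_add, Polynomial.C_eq_natCast]
      simp only [Nat.add_sub_cancel, pow_succ, Polynomial.C_1, map_ofNat]
      ring
    have h0 := integral_eval_derivative ((X:ℝ[X]) * ((X:ℝ[X])^2-1)^(n+1)) (-1) 1
    rw [key] at h0
    have hsplit : ∫ x in (-1:ℝ)..1,
        ((C ((n:ℝ)) * 2 + 3) * ((X:ℝ[X])^2-1)^(n+1)
          + (C ((n:ℝ)) * 2 + 2) * ((X:ℝ[X])^2-1)^n).eval x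
        = ((n:ℝ)*2+3) * (∫ x in (-1:ℝ)..1, (((X:ℝ[X])^2-1)^(n+1)).eval x)
          + ((n:ℝ)*2+2) * (∫ x in (-1:ℝ)..1, (((X:ℝ[X])^2-1)^n).eval x) := by
      rw [← intervalIntegral.integral_const_mul, ← intervalIntegral.integral_const_mul,
        ← intervalIntegral.integral_add]
      · simp
      · exact ((poly_intInt (((X:ℝ[X])^2-1)^(n+1)) (-1) 1).const_mul _)
      · exact ((poly_intInt (((X:ℝ[X])^2-1)^n) (-1) 1).const_mul _)
    rw [hsplit] at h0
    have hb : (((X:ℝ[X]) * ((X:ℝ[X])^2-1)^(n+1)).eval 1) = 0 ∧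
        (((X:ℝ[X]) * ((X:ℝ[X])^2-1)^(n+1)).eval (-1)) = 0 := by
      constructor <;> simp
    rw [ih, hb.1, hb.2] at h0
    have hfac1 : ((2*(n+1)+1).factorial : ℝ)
        = (2*(n:ℝ)+3) * (2*(n:ℝ)+2) * ((2*n+1).factorial : ℝ) := by
      have : 2*(n+1)+1 = (2*n+1) + 1 + 1 := by omega
      rw [this, Nat.factorial_succ, Nat.factorial_succ]
      push_cast
      ring
    have hfacpos : (0:ℝ) < ((2*n+1).factorial : ℝ) := by positivity
    have h3 : (2*(n:ℝ)+3) ≠ 0 := by positivity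
    set A := ∫ x in (-1:ℝ)..1, (((X:ℝ[X])^2-1)^(n+1)).eval x with hA
    have hgoal_aux : ((n+1).factorial : ℝ) = ((n:ℝ)+1) * n.factorial := by
      rw [Nat.factorial_succ]; push_cast; ring
    rw [hfac1, hgoal_aux, show 2*(n+1)+1 = (2*n+1)+2 by omega, pow_add, pow_succ]
    field_simp at h0 ⊢
    linear_combination 2 * h0

lemma poly_ibp (f g : ℝ[X]) :
    ∫ x in (-1:ℝ)..1, f.derivative.eval x * g.eval x
      = f.eval 1 * g.eval 1 - f.eval (-1) * g.eval (-1)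
        - ∫ x in (-1:ℝ)..1, f.eval x * g.derivative.eval x := by
  have h := integral_eval_derivative (f*g) (-1) 1
  rw [derivative_mul] at h
  simp only [eval_add, eval_mul] at h
  rw [intervalIntegral.integral_add (f := fun x => f.derivative.eval x * g.eval x)
    (g := fun x => f.eval x * g.derivative.eval x)
    ((f.derivative.continuous.mul g.continuous).intervalIntegrable _ _)
    ((f.continuous.mul g.derivative.continuous).intervalIntegrable _ _)] at h
  linarith

lemma self_chain (n : ℕ) : ∀ i ≤ n,
    ∫ x in (-1:ℝ)..1, (derivative^[n] (((X:ℝ[X])^2-1)^n)).eval x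
        * (derivative^[n] (((X:ℝ[X])^2-1)^n)).eval x
      = (-1)^i * ∫ x in (-1:ℝ)..1,
          (derivative^[n-i] (((X:ℝ[X])^2-1)^n)).eval x
            * (derivative^[n+i] (((X:ℝ[X])^2-1)^n)).eval x := by
  intro i
  induction i with
  | zero => intro _; simp
  | succ i ih =>
    intro hi
    rw [ih (by omega)]
    have hf : derivative (derivative^[n - (i+1)] (((X:ℝ[X])^2-1)^n))
        = derivative^[n-i] (((X:ℝ[X])^2-1)^n) := by
      rw [← Function.iterate_succ_apply' derivative (n-(i+1))]
      congr 1
      omega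
    have hg : derivative (derivative^[n + i] (((X:ℝ[X])^2-1)^n))
        = derivative^[n+(i+1)] (((X:ℝ[X])^2-1)^n) := by
      rw [← Function.iterate_succ_apply' derivative (n+i)]
      congr 1
    have hb1 : (derivative^[n-(i+1)] (((X:ℝ[X])^2-1)^n)).eval 1 = 0 :=
      eval_iter_deriv_W_eq_zero (by omega) (by norm_num)
    have hb2 : (derivative^[n-(i+1)] (((X:ℝ[X])^2-1)^n)).eval (-1) = 0 :=
      eval_iter_deriv_W_eq_zero (by omega) (by norm_num)
    have step := poly_ibp (derivative^[n-(i+1)] (((X:ℝ[X])^2-1)^n))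
      (derivative^[n+i] (((X:ℝ[X])^2-1)^n))
    rw [hf, hg, hb1, hb2] at step
    rw [step]
    ring

lemma iter_deriv_W_top (n : ℕ) :
    derivative^[2*n] (((X:ℝ[X])^2-1)^n) = C ((2*n).factorial : ℝ) := by
  rcases Nat.eq_zero_or_pos n with h0 | hpos
  · subst h0; simp
  have hmonic : (((X:ℝ[X])^2-1)^n).Monic := by
    have : ((X:ℝ[X])^2-1) = X^2 - C 1 := by rw [C_1]
    rw [this]
    exact (monic_X_pow_sub_C (1:ℝ) two_ne_zero).pow n
  have hdeg : (((X:ℝ[X])^2-1)^n).natDegree = 2*n := by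
    have : ((X:ℝ[X])^2-1) = X^2 - C 1 := by rw [C_1]
    rw [natDegree_pow, this, natDegree_X_pow_sub_C]
    ring
  have hsplit : (((X:ℝ[X])^2-1)^n)
      = ((((X:ℝ[X])^2-1)^n) - X^(2*n)) + X^(2*n) := by ring
  rw [hsplit]
  simp only [iterate_map_add]
  have hz : derivative^[2*n] ((((X:ℝ[X])^2-1)^n) - X^(2*n)) = 0 := by
    rcases eq_or_ne ((((X:ℝ[X])^2-1)^n) - X^(2*n)) 0 with hzz | hne
    · rw [hzz]; simp
    · apply iterate_derivative_eq_zero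
      have hdlt : ((((X:ℝ[X])^2-1)^n) - X^(2*n)).degree < (((X:ℝ[X])^2-1)^n).degree := by
        apply degree_sub_lt
        · rw [degree_eq_natDegree hmonic.ne_zero, degree_X_pow, hdeg]
        · exact hmonic.ne_zero
        · rw [hmonic.leadingCoeff, monic_X_pow]
      have := natDegree_lt_natDegree hne hdlt
      omega
  rw [hz, zero_add, iterate_derivative_X_pow_eq_C_mul]
  simp [Nat.descFactorial_self]

lemma legendre_eval' (k : ℕ) (x : ℝ) :
    (legendre k).eval x = ((2 ^ k * Nat.factorial k : ℝ))⁻¹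
      * (derivative^[k] (((X:ℝ[X])^2-1)^k)).eval x := by
  simp [legendre]

lemma denom_eval (n : ℕ) :
    ∫ x in (-1:ℝ)..1, ((legendre n).eval x)^2 = 2 / (2*(n:ℝ)+1) := by
  have hstep : ∀ x : ℝ, ((legendre n).eval x)^2
      = ((2 ^ n * Nat.factorial n : ℝ))⁻¹^2
        * ((derivative^[n] (((X:ℝ[X])^2-1)^n)).eval x
            * (derivative^[n] (((X:ℝ[X])^2-1)^n)).eval x) := by
    intro x
    rw [legendre_eval']
    ring
  simp only [hstep]
  rw [intervalIntegral.integral_const_mul, self_chain n n le_rfl]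
  simp only [Nat.sub_self, Function.iterate_zero, id_eq, ← two_mul, iter_deriv_W_top]
  have : ∫ x in (-1:ℝ)..1, (((X:ℝ[X])^2-1)^n).eval x * (C (((2*n).factorial : ℝ))).eval x
      = ((2*n).factorial : ℝ) * ∫ x in (-1:ℝ)..1, (((X:ℝ[X])^2-1)^n).eval x := by
    simp only [eval_C]
    rw [intervalIntegral.integral_mul_const, mul_comm]
  rw [this, integral_W]
  have hfac1 : ((2*n+1).factorial : ℝ) = (2*(n:ℝ)+1) * ((2*n).factorial : ℝ) := by
    rw [Nat.factorial_succ]; push_cast; ring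
  have h1 : ((2:ℝ)^n * n.factorial) ≠ 0 := by positivity
  have h2 : (0:ℝ) < ((2*n).factorial : ℝ) := by positivity
  have h3 : (0:ℝ) < 2*(n:ℝ)+1 := by positivity
  rw [hfac1]
  have hpow : ((2:ℝ)^(2*n+1)) = 2 * ((2:ℝ)^n)^2 := by
    rw [← pow_mul, pow_succ, mul_comm 2 n]
    ring
  rw [hpow]
  have hsign : ((-1:ℝ))^n * ((-1:ℝ))^n = 1 := by
    rw [← pow_add, ← two_mul, pow_mul]
    norm_num
  field_simp
  linear_combination hsign

lemma numer_split (k : ℕ) :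
    ∫ x in (-1:ℝ)..1, relu x * (legendre k).eval x
      = ∫ x in (0:ℝ)..1, x * (legendre k).eval x := by
  have hcont : Continuous fun x : ℝ => relu x * (legendre k).eval x :=
    (continuous_id.max continuous_const).mul (legendre k).continuous
  rw [← intervalIntegral.integral_add_adjacent_intervals
    (hcont.intervalIntegrable (-1) 0) (hcont.intervalIntegrable 0 1)]
  have h1 : ∫ x in (-1:ℝ)..0, relu x * (legendre k).eval x = 0 := by
    rw [intervalIntegral.integral_congr (g := fun _ => (0:ℝ))]
    · simp
    · intro x hx
      rw [Set.uIcc_of_le (by norm_num)] at hx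
      have hr : relu x = 0 := max_eq_right hx.2
      simp [hr]
  have h2 : ∫ x in (0:ℝ)..1, relu x * (legendre k).eval x
      = ∫ x in (0:ℝ)..1, x * (legendre k).eval x := by
    apply intervalIntegral.integral_congr
    intro x hx
    rw [Set.uIcc_of_le (by norm_num)] at hx
    have hr : relu x = x := max_eq_left hx.1
    simp [hr]
  rw [h1, h2, zero_add]

lemma numer_D (k : ℕ) (hk : 2 ≤ k) :
    ∫ x in (0:ℝ)..1, x * (derivative^[k] (((X:ℝ[X])^2-1)^k)).eval x
      = (derivative^[k-2] (((X:ℝ[X])^2-1)^k)).eval 0 := by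
  have h1 : derivative (derivative^[k-1] (((X:ℝ[X])^2-1)^k))
      = derivative^[k] (((X:ℝ[X])^2-1)^k) := by
    rw [← Function.iterate_succ_apply' derivative (k-1)]; congr 1; omega
  have h2 : derivative (derivative^[k-2] (((X:ℝ[X])^2-1)^k))
      = derivative^[k-1] (((X:ℝ[X])^2-1)^k) := by
    rw [← Function.iterate_succ_apply' derivative (k-2)]; congr 1; omega
  have hQ : (X * derivative^[k-1] (((X:ℝ[X])^2-1)^k)
        - derivative^[k-2] (((X:ℝ[X])^2-1)^k)).derivative
      = X * derivative^[k] (((X:ℝ[X])^2-1)^k) := by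
    rw [derivative_sub, derivative_mul, derivative_X, h1, h2]; ring
  have hint := integral_eval_derivative (X * derivative^[k-1] (((X:ℝ[X])^2-1)^k)
    - derivative^[k-2] (((X:ℝ[X])^2-1)^k)) 0 1
  rw [hQ] at hint
  have hb1 : (derivative^[k-1] (((X:ℝ[X])^2-1)^k)).eval 1 = 0 :=
    eval_iter_deriv_W_eq_zero (by omega) (by norm_num)
  have hb2 : (derivative^[k-2] (((X:ℝ[X])^2-1)^k)).eval 1 = 0 :=
    eval_iter_deriv_W_eq_zero (by omega) (by norm_num)
  simp only [eval_mul, eval_X, eval_sub, hb1, hb2] at hint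
  rw [hint]
  ring

lemma numer_val (k : ℕ) (hk : 2 ≤ k) :
    ∫ x in (-1:ℝ)..1, relu x * (legendre k).eval x
      = ((2 ^ k * Nat.factorial k : ℝ))⁻¹ * ((k-2).factorial
          * (if (k-2) % 2 = 0 then (-1:ℝ)^((k-2)/2 + k) * (k.choose ((k-2)/2)) else 0)) := by
  rw [numer_split]
  have heq : ∀ x : ℝ, x * (legendre k).eval x
      = ((2 ^ k * Nat.factorial k : ℝ))⁻¹
          * (x * (derivative^[k] (((X:ℝ[X])^2-1)^k)).eval x) := by
    intro x; rw [legendre_eval']; ring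
  simp only [heq]
  rw [intervalIntegral.integral_const_mul, numer_D k hk]
  congr 1
  rw [← coeff_zero_eq_eval_zero, Polynomial.coeff_iterate_derivative, zero_add,
    Nat.descFactorial_self, coeff_W, nsmul_eq_mul]

theorem legCoeff_relu (m : ℕ) (hm : 1 ≤ m) :
    legCoeff (2 * m)
        = (-1) ^ m * (4 * (m : ℝ) + 1) / (2 * (2 - 2 * (m : ℝ) * (2 * (m : ℝ) + 1)) * 4 ^ m)
            * ((2 * m).choose m : ℝ) ∧
      legCoeff (2 * m + 1) = 0 := by
  obtain ⟨n, rfl⟩ : ∃ n, m = n + 1 := ⟨m - 1, by omega⟩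
  constructor
  · rw [legCoeff, numer_val (2*(n+1)) (by omega), denom_eval]
    have e1 : 2*(n+1) - 2 = 2*n := by omega
    have e2 : (2*n) % 2 = 0 := by omega
    have e3 : (2*n)/2 = n := by omega
    rw [e1, e2, if_pos rfl, e3]
    have hchoose : ((2*(n+1)).choose (n+1) : ℝ) * ((n:ℝ)+1)
        = ((2*(n+1)).choose n : ℝ) * ((n:ℝ)+2) := by
      have := Nat.choose_succ_right_eq (2*(n+1)) n
      have h2 : 2*(n+1) - n = n + 2 := by omega
      rw [h2] at this
      exact_mod_cast this
    have hfac : ((2*(n+1)).factorial : ℝ)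
        = (2*(n:ℝ)+2) * (2*(n:ℝ)+1) * ((2*n).factorial : ℝ) := by
      have : 2*(n+1) = (2*n) + 1 + 1 := by omega
      rw [this, Nat.factorial_succ, Nat.factorial_succ]
      push_cast; ring
    have hsign : ((-1:ℝ))^(n + 2*(n+1)) = (-1:ℝ)^n := by
      rw [pow_add, pow_mul]
      norm_num
    have hsign2 : ((-1:ℝ))^(n+1) = -((-1:ℝ))^n := by rw [pow_succ]; ring
    rw [hfac, hsign, hsign2]
    have hne1 : ((2*n).factorial : ℝ) ≠ 0 := by positivity
    have hne2 : ((n:ℝ)+1) ≠ 0 := by positivity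
    have hne3 : (2 - 2 * ((n:ℝ)+1) * (2 * ((n:ℝ)+1) + 1)) ≠ 0 := by
      have : (0:ℝ) ≤ n := n.cast_nonneg
      nlinarith
    have hne4 : (2:ℝ)^(2*(n+1)) ≠ 0 := by positivity
    have hne5 : (4:ℝ)^(n+1) ≠ 0 := by positivity
    have hne6 : (2*(2*(n+1):ℕ):ℝ)+1 ≠ 0 := by positivity
    have h4 : (4:ℝ)^(n+1) = ((2:ℝ)^(2*(n+1))) := by
      rw [show (4:ℝ) = 2^2 by norm_num, ← pow_mul, mul_comm 2 (n+1)]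
    push_cast
    rw [h4]
    field_simp
    have hne7 : (1 - ((n:ℝ)+1) * (2*((n:ℝ)+1)+1)) ≠ 0 := by
      intro h; apply hne3; linear_combination 2 * h
    rw [eq_comm, neg_eq_iff_eq_neg, div_eq_iff hne7]
    linear_combination (2*(n:ℝ)+1) * (4*(n:ℝ)+5) * hchoose
  · rw [legCoeff, numer_val (2*(n+1)+1) (by omega)]
    have e1 : 2*(n+1)+1 - 2 = 2*n+1 := by omega
    have e2 : (2*n+1) % 2 = 1 := by omega
    rw [e1, e2]
    norm_num
end

section
/- For every integer k ≥ 2, the k-th Legendre polynomial satisfies ∫_{0}^{1} x L_k(x) dx = L_k(0) / (2 − k(k+1)). -/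
open Polynomial

private lemma iter_deriv_X_mul (p : Polynomial ℝ) :
    ∀ n : ℕ, (fun q : Polynomial ℝ => q.derivative)^[n+1] (X * p)
      = X * (fun q : Polynomial ℝ => q.derivative)^[n+1] p
        + ((n+1 : ℕ) : ℝ) • (fun q : Polynomial ℝ => q.derivative)^[n] p := by
  intro n
  induction n with
  | zero => simp [derivative_mul]; abel
  | succ n ih =>
      rw [Function.iterate_succ_apply' _ (n+1), ih,
        Function.iterate_succ_apply' _ (n+1) p]
      show derivative _ = _
      rw [derivative_add, derivative_mul, derivative_smul, derivative_X]
      rw [Function.iterate_succ_apply' _ n p]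
      push_cast
      simp only [one_mul]
      module

private lemma iter_deriv_sq_mul (p : Polynomial ℝ) :
    ∀ n : ℕ, (fun q : Polynomial ℝ => q.derivative)^[n+2] ((X^2 - 1) * p)
      = (X^2 - 1) * (fun q : Polynomial ℝ => q.derivative)^[n+2] p
        + (2 * ((n:ℝ)+2)) • (X * (fun q : Polynomial ℝ => q.derivative)^[n+1] p)
        + (((n:ℝ)+2) * ((n:ℝ)+1)) • (fun q : Polynomial ℝ => q.derivative)^[n] p := by
  intro n
  induction n with
  | zero =>
      show derivative (derivative _) = _
      simp only [Function.iterate_succ_apply', Function.iterate_zero_apply]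
      simp only [derivative_mul, derivative_add, derivative_sub, derivative_one,
        derivative_pow, derivative_X, derivative_C, derivative_zero, derivative_ofNat]
      push_cast
      simp only [smul_eq_C_mul, map_add, map_mul, map_one, map_ofNat, map_zero]
      ring
  | succ n ih =>
      have e1 : (fun q : Polynomial ℝ => q.derivative)^[n+1] p
          = derivative ((fun q : Polynomial ℝ => q.derivative)^[n] p) :=
        Function.iterate_succ_apply' _ n p
      have e2 : (fun q : Polynomial ℝ => q.derivative)^[n+2] p
          = derivative (derivative ((fun q : Polynomial ℝ => q.derivative)^[n] p)) := by
        rw [Function.iterate_succ_apply' _ (n+1) p, e1]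
      have e3 : (fun q : Polynomial ℝ => q.derivative)^[n+3] p
          = derivative (derivative (derivative ((fun q : Polynomial ℝ => q.derivative)^[n] p))) := by
        rw [Function.iterate_succ_apply' _ (n+2) p, e2]
      rw [show n+1+2 = n+2+1 from rfl, Function.iterate_succ_apply' _ (n+2), ih]
      rw [e1, e2]
      set q := (fun q : Polynomial ℝ => q.derivative)^[n] p with hq
      rw [show n+2+1 = n+3 from rfl, e3]
      simp only [derivative_add, derivative_mul, derivative_smul, derivative_sub,
        derivative_one, derivative_pow, derivative_X, derivative_C, derivative_zero,
        derivative_ofNat]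
      push_cast
      simp only [smul_eq_C_mul, map_add, map_mul, map_one, map_ofNat, map_zero]
      ring

private lemma iter_deriv_smul (c : ℝ) (p : Polynomial ℝ) (n : ℕ) :
    (fun q : Polynomial ℝ => q.derivative)^[n] (c • p)
      = c • (fun q : Polynomial ℝ => q.derivative)^[n] p := by
  induction n with
  | zero => rfl
  | succ n ih =>
      rw [Function.iterate_succ_apply' _ n, ih, Function.iterate_succ_apply' _ n]
      exact derivative_smul c _

private lemma legendre_ode (k : ℕ) (hk : 2 ≤ k) :
    derivative ((X^2 - 1) * derivative (legendre k))
      = ((k:ℝ) * ((k:ℝ)+1)) • legendre k := by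
  obtain ⟨m, rfl⟩ : ∃ m, k = m + 2 := ⟨k - 2, by omega⟩
  set u : Polynomial ℝ := (X^2 - 1)^(m+2) with hu
  have h1 : (X^2 - 1) * derivative u = (2 * ((m:ℝ)+2)) • (X * u) := by
    rw [hu, derivative_pow]
    simp only [derivative_sub, derivative_one, derivative_X_pow, sub_zero]
    push_cast
    simp only [smul_eq_C_mul, map_add, map_mul, map_one, map_ofNat, map_zero, map_natCast]
    ring
  have h2 := congrArg (fun q => (fun q : Polynomial ℝ => q.derivative)^[m+3] q) h1
  rw [iter_deriv_smul] at h2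
  have hL := iter_deriv_sq_mul (derivative u) (m+1)
  have hR := iter_deriv_X_mul u (m+2)
  -- identify iterates of derivative u with iterates of u
  have hc : ∀ n : ℕ, (fun q : Polynomial ℝ => q.derivative)^[n] (derivative u)
      = (fun q : Polynomial ℝ => q.derivative)^[n+1] u := fun n =>
    (Function.iterate_succ_apply (fun q : Polynomial ℝ => q.derivative) n u).symm
  set v : Polynomial ℝ := (fun q : Polynomial ℝ => q.derivative)^[m+2] u with hv
  have e3 : (fun q : Polynomial ℝ => q.derivative)^[m+3] u = derivative v :=
    Function.iterate_succ_apply' _ (m+2) u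
  have e4 : (fun q : Polynomial ℝ => q.derivative)^[m+4] u = derivative (derivative v) := by
    rw [Function.iterate_succ_apply' _ (m+3) u, e3]
  rw [show m+1+2 = m+3 from rfl, show m+1+1 = m+2 from rfl] at hL
  rw [hc (m+3), hc (m+2), hc (m+1), show m+3+1 = m+4 from rfl, show m+2+1 = m+3 from rfl,
    show m+1+1 = m+2 from rfl, e3, e4, ← hv] at hL
  rw [show m+2+1 = m+3 from rfl, e3] at hR
  rw [hL, hR] at h2
  -- core identity
  have core : derivative ((X^2 - 1) * derivative v) = (((m:ℝ)+2) * (((m:ℝ)+2)+1)) • v := by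
    rw [derivative_mul]
    simp only [derivative_sub, derivative_one, derivative_X_pow, sub_zero] at h2 ⊢
    push_cast at h2 ⊢
    simp only [smul_eq_C_mul, map_add, map_mul, map_one, map_ofNat, map_zero, map_natCast] at h2 ⊢
    linear_combination h2
  have hleg : legendre (m+2) = ((2 ^ (m+2) * Nat.factorial (m+2) : ℝ))⁻¹ • v := rfl
  rw [hleg, derivative_smul, mul_smul_comm, derivative_smul, core, smul_comm]
  push_cast
  norm_num

theorem integral_x_mul_legendre (k : ℕ) (hk : 2 ≤ k) :
    ∫ x in (0:ℝ)..1, x * (legendre k).eval x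
      = (legendre k).eval 0 / (2 - (k : ℝ) * ((k : ℝ) + 1)) := by
  set L := legendre k with hLdef
  set μ : ℝ := (k:ℝ) * ((k:ℝ)+1) with hμ
  have hμ6 : (6:ℝ) ≤ μ := by
    rw [hμ]
    have : (2:ℝ) ≤ (k:ℝ) := by exact_mod_cast hk
    nlinarith
  set G : Polynomial ℝ := X * ((X^2 - 1) * derivative L) - (X^2 - 1) * L with hG
  have hode := legendre_ode k hk
  have hG' : derivative G = (μ - 2) • (X * L) := by
    have h5 : derivative (X * ((X^2-1) * derivative L))
        = (X^2-1) * derivative L + X * (((k:ℝ)*((k:ℝ)+1)) • L) := by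
      rw [derivative_mul, derivative_X, one_mul, hode]
    rw [hG, derivative_sub, h5, derivative_mul, hμ]
    simp only [derivative_sub, derivative_one, derivative_X_pow, sub_zero]
    push_cast
    simp only [smul_eq_C_mul, map_add, map_mul, map_one, map_ofNat, map_sub, map_natCast]
    ring
  have hFTC : ∫ x in (0:ℝ)..1, (derivative G).eval x = G.eval 1 - G.eval 0 :=
    intervalIntegral.integral_eq_sub_of_hasDerivAt (f := fun x => G.eval x)
      (f' := fun x => (derivative G).eval x) (fun x _ => G.hasDerivAt x)
      (((derivative G).continuous).intervalIntegrable _ _)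
  have hint : ∫ x in (0:ℝ)..1, (derivative G).eval x
      = (μ - 2) * ∫ x in (0:ℝ)..1, x * L.eval x := by
    rw [hG', ← intervalIntegral.integral_const_mul]
    congr 1
    ext x
    simp [mul_assoc]
  have hG1 : G.eval 1 = 0 := by simp [hG]
  have hG0 : G.eval 0 = L.eval 0 := by simp [hG]
  have key : (μ - 2) * ∫ x in (0:ℝ)..1, x * L.eval x = - L.eval 0 := by
    rw [← hint, hFTC, hG1, hG0]; ring
  rw [eq_div_iff (by linarith : (2:ℝ) - μ ≠ 0)]
  nlinarith [key]
end
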